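/- Under the conditionally i.i.d. model p(w) p(z|w) ∏_{n=1}^N p(zₙ|w) with finite-valued variables, the conditional mutual information satisfies I(W; Z | Z^N) ≤ (1/N) I(W; Z^N) - (1/N) Σ_{n'=1}^{N-1} Σ_{n=n'}^{N-1} I(Z_{n+1}; Zₙ | Z^{n-1}). -/

import Mathlib

open Finset

/-- Probability that a finite-valued random variable `X` on the finite
sample space `Ω` (with pmf `p`) takes the value `x`. -/
noncomputable def probOf {Ω α : Type*} [Fintype Ω] [DecidableEq α]
    (p : Ω → ℝ) (X : Ω → α) (x : α) : ℝ :=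
  ∑ ω, if X ω = x then p ω else 0

/-- Shannon entropy (natural logarithm) of a finite-valued random variable. -/
noncomputable def entropy {Ω α : Type*} [Fintype Ω] [Fintype α] [DecidableEq α]
    (p : Ω → ℝ) (X : Ω → α) : ℝ :=
  -∑ x, probOf p X x * Real.log (probOf p X x)

/-- Conditional Shannon entropy `H(X | Y)`. -/
noncomputable def condEntropy {Ω α β : Type*} [Fintype Ω] [Fintype α] [DecidableEq α]
    [Fintype β] [DecidableEq β] (p : Ω → ℝ) (X : Ω → α) (Y : Ω → β) : ℝ :=
  entropy p (fun ω => (X ω, Y ω)) - entropy p Y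

/-- Mutual information `I(X; Y)`. -/
noncomputable def mutualInfo {Ω α β : Type*} [Fintype Ω] [Fintype α] [DecidableEq α]
    [Fintype β] [DecidableEq β] (p : Ω → ℝ) (X : Ω → α) (Y : Ω → β) : ℝ :=
  entropy p X + entropy p Y - entropy p (fun ω => (X ω, Y ω))

/-- Conditional mutual information `I(X; Y | Z)`. -/
noncomputable def condMI {Ω α β γ : Type*} [Fintype Ω] [Fintype α] [DecidableEq α]
    [Fintype β] [DecidableEq β] [Fintype γ] [DecidableEq γ]
    (p : Ω → ℝ) (X : Ω → α) (Y : Ω → β) (Z : Ω → γ) : ℝ :=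
  condEntropy p X Z + condEntropy p Y Z - condEntropy p (fun ω => (X ω, Y ω)) Z

/-- `p` is a probability mass function. -/
def IsPMF {Ω : Type*} [Fintype Ω] (p : Ω → ℝ) : Prop :=
  (∀ ω, 0 ≤ p ω) ∧ ∑ ω, p ω = 1


/-!
Write `B m = H(Z₁, …, Zₘ)` and `c = H(Z | W)`. The coordinates are exchangeable, so a function of
the sample that carries exactly the information of `k` of the `Zᵢ` has entropy `B k`, and one that
carries exactly `W` and `k` of the `Zᵢ` has entropy `H(W) + k c`. Hence `I(W; Z | Zᴺ) =
B (N+1) - B N - c`, `I(W; Zᴺ) = B N - N c`, and `I(Zₙ₊₁; Zₙ | Zⁿ⁻¹) = 2 B n - B (n-1) - B (n+1)` is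
minus a second difference of `B`, so the double sum telescopes to `N B (N-1) - (N-1) B N`. The
right-hand side is then `B N - B (N-1) - c`, and the claim becomes the concavity
`B (N+1) - B N ≤ B N - B (N-1)`, which is the nonnegativity of `I(Z_{N+1}; Z_N | Z^{N-1})`.
-/

section Entropy

variable {Ω α β γ : Type*} [Fintype Ω] [DecidableEq α] [DecidableEq β] [DecidableEq γ]
  {p : Ω → ℝ}

lemma probOf_nonneg (hp : ∀ ω, 0 ≤ p ω) (X : Ω → α) (x : α) : 0 ≤ probOf p X x :=
  sum_nonneg fun ω _ => by split_ifs <;> simp [hp ω]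

lemma le_probOf_apply (hp : ∀ ω, 0 ≤ p ω) (X : Ω → α) (ω : Ω) : p ω ≤ probOf p X (X ω) := by
  have := single_le_sum (f := fun ω' => if X ω' = X ω then p ω' else 0)
    (fun ω' _ => by split_ifs <;> simp [hp ω']) (mem_univ ω)
  simpa [probOf] using this

lemma sum_mul_comp_eq_sum_probOf_mul [Fintype α] (X : Ω → α) (g : α → ℝ) :
    ∑ ω, p ω * g (X ω) = ∑ x, probOf p X x * g x := by
  simp only [probOf, sum_mul, ite_mul, zero_mul]
  rw [sum_comm]
  simp

lemma sum_probOf [Fintype α] (X : Ω → α) : ∑ x, probOf p X x = ∑ ω, p ω := by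
  simpa using (sum_mul_comp_eq_sum_probOf_mul (p := p) X fun _ => 1).symm

lemma sum_probOf_prodMk [Fintype α] (X : Ω → α) (Y : Ω → β) (y : β) :
    ∑ x, probOf p (fun ω => (X ω, Y ω)) (x, y) = probOf p Y y := by
  simp only [probOf, Prod.mk.injEq, ite_and]
  rw [sum_comm]
  simp

lemma entropy_eq_sum_negMulLog [Fintype α] (X : Ω → α) :
    entropy p X = ∑ x, Real.negMulLog (probOf p X x) := by
  simp [entropy, Real.negMulLog]

lemma entropy_eq_sum_sample [Fintype α] (X : Ω → α) :
    entropy p X = -∑ ω, p ω * Real.log (probOf p X (X ω)) := by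
  rw [sum_mul_comp_eq_sum_probOf_mul X fun x => Real.log (probOf p X x), entropy]

lemma entropy_congr_of_fibers [Fintype α] [Fintype β] {X : Ω → α} {Y : Ω → β}
    (h : ∀ ω ω', X ω = X ω' ↔ Y ω = Y ω') : entropy p X = entropy p Y := by
  have hprob : ∀ ω, probOf p X (X ω) = probOf p Y (Y ω) := fun ω =>
    sum_congr rfl fun ω' _ => by simp only [h ω' ω]
  simp only [entropy_eq_sum_sample, hprob]

lemma condMI_eq_sum_sample [Fintype α] [Fintype β] [Fintype γ]
    (X : Ω → α) (Y : Ω → β) (Z : Ω → γ) :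
    condMI p X Y Z = ∑ ω, p ω * (Real.log (probOf p (fun ω => ((X ω, Y ω), Z ω)) ((X ω, Y ω), Z ω))
      + Real.log (probOf p Z (Z ω)) - Real.log (probOf p (fun ω => (X ω, Z ω)) (X ω, Z ω))
      - Real.log (probOf p (fun ω => (Y ω, Z ω)) (Y ω, Z ω))) := by
  simp only [condMI, condEntropy, entropy_eq_sum_sample, mul_add, mul_sub, sum_add_distrib,
    sum_sub_distrib]
  ring

lemma one_sub_mul_div_mul_le_log {a b c d : ℝ} (ha : 0 < a) (hb : 0 < b) (hc : 0 < c)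
    (hd : 0 < d) : 1 - a * b / (c * d) ≤ Real.log c + Real.log d - Real.log a - Real.log b := by
  have h := Real.log_le_sub_one_of_pos (by positivity : 0 < a * b / (c * d))
  rw [Real.log_div (by positivity) (by positivity), Real.log_mul ha.ne' hb.ne',
    Real.log_mul hc.ne' hd.ne'] at h
  linarith

lemma sum_probOf_mul_probOf_div_probOf [Fintype α] [Fintype β] [Fintype γ]
    (X : Ω → α) (Y : Ω → β) (Z : Ω → γ) :
    ∑ v : (α × β) × γ, probOf p (fun ω => (X ω, Z ω)) (v.1.1, v.2)
      * probOf p (fun ω => (Y ω, Z ω)) (v.1.2, v.2) / probOf p Z v.2 = ∑ ω, p ω := by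
  rw [Fintype.sum_prod_type_right, ← sum_probOf Z]
  refine sum_congr rfl fun z _ => ?_
  simp only [Fintype.sum_prod_type, ← sum_div, ← sum_mul_sum]
  rw [sum_probOf_prodMk, sum_probOf_prodMk, mul_self_div_self]

/- Gibbs: `log t ≤ t - 1` at each sample point, for `t = P(x,z) P(y,z) / (P(x,y,z) P(z))`, and
`∑ P(x,y,z) t ≤ ∑ P(x,z) P(y,z) / P(z) = ∑ P(z)`. -/
theorem condMI_nonneg [Fintype α] [Fintype β] [Fintype γ] (hp : ∀ ω, 0 ≤ p ω)
    (X : Ω → α) (Y : Ω → β) (Z : Ω → γ) : 0 ≤ condMI p X Y Z := by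
  set V := fun ω => ((X ω, Y ω), Z ω)
  set G : (α × β) × γ → ℝ := fun v => probOf p (fun ω => (X ω, Z ω)) (v.1.1, v.2)
    * probOf p (fun ω => (Y ω, Z ω)) (v.1.2, v.2) / probOf p Z v.2
  have hG : ∀ v, 0 ≤ G v := fun v => div_nonneg
    (mul_nonneg (probOf_nonneg hp _ _) (probOf_nonneg hp _ _)) (probOf_nonneg hp _ _)
  have hratio : ∑ ω, p ω * (G (V ω) / probOf p V (V ω)) ≤ ∑ ω, p ω := by
    rw [sum_mul_comp_eq_sum_probOf_mul V fun v => G v / probOf p V v,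
      ← sum_probOf_mul_probOf_div_probOf X Y Z]
    refine sum_le_sum fun v _ => ?_
    rcases eq_or_ne (probOf p V v) 0 with h | h
    · simpa [h] using hG v
    · rw [mul_div_cancel₀ _ h]
  have hpoint : ∀ ω, p ω - p ω * (G (V ω) / probOf p V (V ω)) ≤ p ω *
      (Real.log (probOf p V (V ω)) + Real.log (probOf p Z (Z ω))
        - Real.log (probOf p (fun ω => (X ω, Z ω)) (X ω, Z ω))
        - Real.log (probOf p (fun ω => (Y ω, Z ω)) (Y ω, Z ω))) := fun ω => by
    rcases (hp ω).eq_or_lt with h | h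
    · simp [← h]
    rw [← mul_one_sub, div_div, mul_comm (probOf p Z _)]
    exact mul_le_mul_of_nonneg_left
      (one_sub_mul_div_mul_le_log (h.trans_le (le_probOf_apply hp _ ω))
        (h.trans_le (le_probOf_apply hp _ ω)) (h.trans_le (le_probOf_apply hp _ ω))
        (h.trans_le (le_probOf_apply hp _ ω))) h.le
  calc 0 ≤ ∑ ω, p ω - ∑ ω, p ω * (G (V ω) / probOf p V (V ω)) := sub_nonneg.2 hratio
    _ = ∑ ω, (p ω - p ω * (G (V ω) / probOf p V (V ω))) := sum_sub_distrib _ _ |>.symm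
    _ ≤ _ := sum_le_sum fun ω _ => hpoint ω
    _ = condMI p X Y Z := (condMI_eq_sum_sample X Y Z).symm

end Entropy

section Mixture

variable {ι 𝓦 𝓩 : Type*}

def iidMixture [Fintype ι] (π : 𝓦 → ℝ) (q : 𝓦 → 𝓩 → ℝ) : 𝓦 × (ι → 𝓩) → ℝ :=
  fun ω => π ω.1 * ∏ i, q ω.1 (ω.2 i)

lemma sum_prod_congr_equiv [Fintype 𝓩] {q : 𝓦 → 𝓩 → ℝ} {κ κ' : Type*} [Fintype κ]
    [DecidableEq κ] [Fintype κ'] [DecidableEq κ'] (e : κ ≃ κ') (F : (𝓦 → ℝ) → ℝ) :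
    ∑ z : κ → 𝓩, F (fun w => ∏ k, q w (z k)) = ∑ z : κ' → 𝓩, F (fun w => ∏ k, q w (z k)) :=
  Fintype.sum_equiv (e.arrowCongr (Equiv.refl 𝓩)) _ _ fun z => by
    congr; funext w; exact (e.symm.prod_comp fun k => q w (z k)).symm

variable [Fintype 𝓦] [Fintype 𝓩]

/-- `H(Z₁, …, Zₘ)` under `iidMixture π q`. -/
noncomputable def mixtureEntropy (π : 𝓦 → ℝ) (q : 𝓦 → 𝓩 → ℝ) (m : ℕ) : ℝ :=
  ∑ z : Fin m → 𝓩, Real.negMulLog (∑ w, π w * ∏ i, q w (z i))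

/-- `H(Z | W)` under `iidMixture π q`. -/
noncomputable def componentEntropy (π : 𝓦 → ℝ) (q : 𝓦 → 𝓩 → ℝ) : ℝ :=
  ∑ w, π w * ∑ x, Real.negMulLog (q w x)

variable {π : 𝓦 → ℝ} {q : 𝓦 → 𝓩 → ℝ}

lemma mixtureEntropy_zero (hπ : ∑ w, π w = 1) : mixtureEntropy π q 0 = 0 := by
  simp [mixtureEntropy, hπ]

lemma sum_prod_eq_one {κ : Type*} [Fintype κ] [DecidableEq κ] {r : 𝓩 → ℝ}
    (hr : ∑ x, r x = 1) : ∑ z : κ → 𝓩, ∏ k, r (z k) = 1 := by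
  rw [← Fintype.prod_sum fun _ x => r x]
  simp [hr]

lemma sum_negMulLog_mul_prod {r : 𝓩 → ℝ} (hr : ∑ x, r x = 1) (m : ℕ) (a : ℝ) :
    ∑ z : Fin m → 𝓩, Real.negMulLog (a * ∏ i, r (z i))
      = Real.negMulLog a + m * a * ∑ x, Real.negMulLog (r x) := by
  induction m generalizing a with
  | zero => simp
  | succ m ih =>
    rw [← (Fin.consEquiv fun _ => 𝓩).sum_comp, Fintype.sum_prod_type]
    simp only [Fin.consEquiv, Equiv.coe_fn_mk, Fin.prod_univ_succ, Fin.cons_zero, Fin.cons_succ,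
      ← mul_assoc, ih]
    simp only [sum_add_distrib, Real.negMulLog_mul, ← sum_mul, ← mul_sum, hr]
    push_cast
    ring

variable [Fintype ι] [DecidableEq ι] [DecidableEq 𝓦] [DecidableEq 𝓩]

lemma probOf_prodMk_restrict (hq : ∀ w, ∑ x, q w x = 1) (P : ι → Prop) [DecidablePred P]
    (w : 𝓦) (z : {i // P i} → 𝓩) :
    probOf (iidMixture π q) (fun ω : 𝓦 × (ι → 𝓩) => (ω.1, fun i : {i // P i} => ω.2 i)) (w, z)
      = π w * ∏ i, q w (z i) := by
  simp only [probOf, iidMixture, Fintype.sum_prod_type, Prod.mk.injEq, ite_and]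
  rw [sum_eq_single w (fun w' _ hw' => by simp [hw']) (by simp)]
  simp only [if_true]
  refine (Fintype.sum_equiv (Equiv.piEquivPiSubtypeProd P fun _ => 𝓩) _
    (fun ab => if ab.1 = z then π w * ((∏ i, q w (ab.1 i)) * ∏ i, q w (ab.2 i)) else 0)
    fun f => ?_).trans ?_
  · rw [← Fintype.prod_subtype_mul_prod_subtype P fun i => q w (f i)]
    rfl
  · simp [Fintype.sum_prod_type, ← mul_sum, sum_prod_eq_one (hq w)]

lemma probOf_restrict (hq : ∀ w, ∑ x, q w x = 1) (P : ι → Prop) [DecidablePred P]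
    (z : {i // P i} → 𝓩) :
    probOf (iidMixture π q) (fun ω : 𝓦 × (ι → 𝓩) => fun i : {i // P i} => ω.2 i) z
      = ∑ w, π w * ∏ i, q w (z i) := by
  rw [← sum_probOf_prodMk (fun ω : 𝓦 × (ι → 𝓩) => ω.1)]
  simp only [probOf_prodMk_restrict hq]

lemma entropy_restrict (hq : ∀ w, ∑ x, q w x = 1) (P : ι → Prop) [DecidablePred P] :
    entropy (iidMixture π q) (fun ω : 𝓦 × (ι → 𝓩) => fun i : {i // P i} => ω.2 i)
      = mixtureEntropy π q (Fintype.card {i // P i}) := by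
  simp only [entropy_eq_sum_negMulLog, probOf_restrict hq]
  exact sum_prod_congr_equiv (Fintype.equivFin _) fun g => Real.negMulLog (∑ w, π w * g w)

lemma entropy_prodMk_restrict (hq : ∀ w, ∑ x, q w x = 1) (P : ι → Prop) [DecidablePred P] :
    entropy (iidMixture π q) (fun ω : 𝓦 × (ι → 𝓩) => (ω.1, fun i : {i // P i} => ω.2 i))
      = ∑ w, Real.negMulLog (π w) + Fintype.card {i // P i} * componentEntropy π q := by
  rw [entropy_eq_sum_negMulLog, Fintype.sum_prod_type]
  simp only [probOf_prodMk_restrict hq]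
  rw [sum_comm, sum_prod_congr_equiv (Fintype.equivFin _)
    fun g => ∑ w, Real.negMulLog (π w * g w), sum_comm]
  simp only [sum_negMulLog_mul_prod (hq _), sum_add_distrib, componentEntropy, mul_sum, mul_assoc]

end Mixture

section RevealsCoords

variable {ι 𝓦 𝓩 γ δ : Type*}

def RevealsCoords (V : 𝓦 × (ι → 𝓩) → γ) (P : ι → Prop) : Prop :=
  ∀ ω ω', V ω = V ω' ↔ ∀ i, P i → ω.2 i = ω'.2 i

lemma revealsCoords_restrict (P : ι → Prop) :
    RevealsCoords (fun ω : 𝓦 × (ι → 𝓩) => fun i : {i // P i} => ω.2 i) P := by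
  simp [RevealsCoords, funext_iff]

lemma revealsCoords_apply (j : ι) :
    RevealsCoords (fun ω : 𝓦 × (ι → 𝓩) => ω.2 j) (· = j) := by
  simp [RevealsCoords]

lemma RevealsCoords.prodMk {X : 𝓦 × (ι → 𝓩) → γ} {Y : 𝓦 × (ι → 𝓩) → δ} {P Q : ι → Prop}
    (hX : RevealsCoords X P) (hY : RevealsCoords Y Q) :
    RevealsCoords (fun ω => (X ω, Y ω)) (fun i => P i ∨ Q i) := by
  intro ω ω'
  simp only [Prod.mk.injEq, hX ω ω', hY ω ω', or_imp, forall_and]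

lemma RevealsCoords.of_iff {V : 𝓦 × (ι → 𝓩) → γ} {P Q : ι → Prop} (hV : RevealsCoords V P)
    (h : ∀ i, P i ↔ Q i) : RevealsCoords V Q := by
  simpa only [RevealsCoords, h] using hV

lemma revealsCoords_prefix {n m : ℕ} (e : Fin m → Fin n) (he : ∀ k, (e k : ℕ) = k) :
    RevealsCoords (fun ω : 𝓦 × (Fin n → 𝓩) => fun k => ω.2 (e k)) (fun i => (i : ℕ) < m) := by
  intro ω ω'
  simp only [funext_iff]
  constructor
  · intro h i hi
    simpa [show e ⟨i, hi⟩ = i from Fin.ext (he _)] using h ⟨i, hi⟩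
  · exact fun h k => h _ ((he k).symm ▸ k.isLt)

lemma revealsCoords_apply_of_val_eq {n k : ℕ} {j : Fin n} (hj : (j : ℕ) = k) :
    RevealsCoords (fun ω : 𝓦 × (Fin n → 𝓩) => ω.2 j) (fun i => (i : ℕ) = k) :=
  (revealsCoords_apply j).of_iff fun i => by rw [Fin.ext_iff, hj]

variable [Fintype ι] [DecidableEq ι] [Fintype 𝓦] [DecidableEq 𝓦] [Fintype 𝓩] [DecidableEq 𝓩]
  [Fintype γ] [DecidableEq γ] {π : 𝓦 → ℝ} {q : 𝓦 → 𝓩 → ℝ}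

lemma entropy_eq_mixtureEntropy (hq : ∀ w, ∑ x, q w x = 1) {V : 𝓦 × (ι → 𝓩) → γ}
    {P : ι → Prop} [DecidablePred P] {m : ℕ} (hV : RevealsCoords V P)
    (hm : Fintype.card {i // P i} = m) :
    entropy (iidMixture π q) V = mixtureEntropy π q m := by
  rw [← hm, ← entropy_restrict hq P]
  exact entropy_congr_of_fibers fun ω ω' => (hV ω ω').trans (revealsCoords_restrict P ω ω').symm

lemma entropy_eq_of_fibers_fst (hq : ∀ w, ∑ x, q w x = 1) {V : 𝓦 × (ι → 𝓩) → γ}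
    {U : 𝓦 × (ι → 𝓩) → δ} {P : ι → Prop} [DecidablePred P] {m : ℕ} (hU : RevealsCoords U P)
    (hm : Fintype.card {i // P i} = m) (hV : ∀ ω ω', V ω = V ω' ↔ ω.1 = ω'.1 ∧ U ω = U ω') :
    entropy (iidMixture π q) V = ∑ w, Real.negMulLog (π w) + m * componentEntropy π q := by
  rw [← hm, ← entropy_prodMk_restrict hq P]
  refine entropy_congr_of_fibers fun ω ω' => ?_
  rw [hV, hU, Prod.mk.injEq, revealsCoords_restrict P]

lemma entropy_fst (hq : ∀ w, ∑ x, q w x = 1) :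
    entropy (iidMixture π q) (fun ω : 𝓦 × (ι → 𝓩) => ω.1) = ∑ w, Real.negMulLog (π w) := by
  have hU : RevealsCoords (fun _ : 𝓦 × (ι → 𝓩) => ()) fun _ => False := by
    simp [RevealsCoords]
  simpa using entropy_eq_of_fibers_fst (V := fun ω : 𝓦 × (ι → 𝓩) => ω.1) (m := 0) hq hU (by simp)
    fun ω ω' => by simp

end RevealsCoords

lemma card_val_eq_or_val_lt {n k m : ℕ} (hk : k < n) (hm : m ≤ k) :
    Fintype.card {i : Fin n // (i : ℕ) = k ∨ (i : ℕ) < m} = m + 1 := by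
  rw [Fintype.card_subtype_or_disjoint _ _
      (Pi.disjoint_iff.2 fun i => Prop.disjoint_iff.2 fun ⟨h1, h2⟩ => by omega),
    Fintype.card_fin_lt_of_le (by omega), add_comm]
  congr
  exact Fintype.card_eq_one_iff.2 ⟨⟨⟨k, hk⟩, rfl⟩, fun i => Subtype.ext (Fin.ext i.2)⟩

lemma sum_Icc_sum_Icc_second_diff (B : ℕ → ℝ) (M : ℕ) :
    ∑ n' ∈ Icc 1 M, ∑ n ∈ Icc n' M, (2 * B n - B (n - 1) - B (n + 1))
      = (M + 1) * B M - M * B (M + 1) - B 0 := by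
  induction M with
  | zero => simp
  | succ M ih =>
    rw [sum_Icc_succ_top (by omega), Icc_self, sum_singleton,
      sum_congr rfl fun n' hn' => sum_Icc_succ_top ((mem_Icc.1 hn').2.trans M.le_succ) _,
      sum_add_distrib, ih, sum_const, Nat.card_Icc, nsmul_eq_mul]
    simp only [Nat.add_sub_cancel]
    push_cast
    ring

section Terms

variable {𝓦 𝓩 : Type*} [Fintype 𝓦] [DecidableEq 𝓦] [Fintype 𝓩] [DecidableEq 𝓩]
  {π : 𝓦 → ℝ} {q : 𝓦 → 𝓩 → ℝ}

lemma condMI_fst_last_eq (hq : ∀ w, ∑ x, q w x = 1) (N : ℕ) :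
    condMI (iidMixture π q) (fun ω => ω.1) (fun ω => ω.2 (Fin.last N))
        (fun ω => fun i : Fin N => ω.2 i.castSucc)
      = mixtureEntropy π q (N + 1) - mixtureEntropy π q N - componentEntropy π q := by
  have hpre := revealsCoords_prefix (𝓦 := 𝓦) (𝓩 := 𝓩) (Fin.castSucc (n := N)) Fin.val_castSucc
  have hpair := (revealsCoords_apply_of_val_eq (𝓦 := 𝓦) (𝓩 := 𝓩) (Fin.val_last N)).prodMk hpre
  have hcard_pre := Fintype.card_fin_lt_of_le (Nat.le_succ N)
  have hcard_pair := card_val_eq_or_val_lt (Nat.lt_succ_self N) le_rfl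
  simp only [condMI, condEntropy]
  rw [entropy_eq_of_fibers_fst hq hpre hcard_pre fun _ _ => Prod.ext_iff,
    entropy_eq_mixtureEntropy hq hpre hcard_pre, entropy_eq_mixtureEntropy hq hpair hcard_pair,
    entropy_eq_of_fibers_fst hq hpair hcard_pair fun _ _ => by simp only [Prod.mk.injEq, and_assoc]]
  push_cast
  ring

lemma mutualInfo_fst_prefix_eq (hq : ∀ w, ∑ x, q w x = 1) (N : ℕ) :
    mutualInfo (iidMixture π q) (fun ω => ω.1) (fun ω => fun i : Fin N => ω.2 i.castSucc)
      = mixtureEntropy π q N - N * componentEntropy π q := by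
  have hpre := revealsCoords_prefix (𝓦 := 𝓦) (𝓩 := 𝓩) (Fin.castSucc (n := N)) Fin.val_castSucc
  have hcard_pre := Fintype.card_fin_lt_of_le (Nat.le_succ N)
  rw [mutualInfo, entropy_fst hq, entropy_eq_mixtureEntropy hq hpre hcard_pre,
    entropy_eq_of_fibers_fst hq hpre hcard_pre fun _ _ => Prod.ext_iff]
  ring

lemma condMI_consecutive_eq (hq : ∀ w, ∑ x, q w x = 1) {N n : ℕ} (hn : 1 ≤ n)
    {j j' : Fin (N + 1)} (hj : (j : ℕ) = n) (hj' : (j' : ℕ) = n - 1)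
    (e : Fin (n - 1) → Fin (N + 1)) (he : ∀ k, (e k : ℕ) = k) :
    condMI (iidMixture π q) (fun ω => ω.2 j) (fun ω => ω.2 j') (fun ω k => ω.2 (e k))
      = 2 * mixtureEntropy π q n - mixtureEntropy π q (n - 1) - mixtureEntropy π q (n + 1) := by
  have hnN : n < N + 1 := hj ▸ j.isLt
  have hpre := revealsCoords_prefix (𝓦 := 𝓦) (𝓩 := 𝓩) e he
  have hZn := revealsCoords_apply_of_val_eq (𝓦 := 𝓦) (𝓩 := 𝓩) hj
  have hZn' := revealsCoords_apply_of_val_eq (𝓦 := 𝓦) (𝓩 := 𝓩) hj'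
  have hall := ((hZn.prodMk hZn').prodMk hpre).of_iff
    (Q := fun i : Fin (N + 1) => (i : ℕ) = n ∨ (i : ℕ) < n) fun i => by omega
  simp only [condMI, condEntropy]
  rw [entropy_eq_mixtureEntropy hq (hZn.prodMk hpre) (card_val_eq_or_val_lt hnN (by omega)),
    entropy_eq_mixtureEntropy hq hpre (Fintype.card_fin_lt_of_le (by omega)),
    entropy_eq_mixtureEntropy hq (hZn'.prodMk hpre) (card_val_eq_or_val_lt (by omega) le_rfl),
    entropy_eq_mixtureEntropy hq hall (card_val_eq_or_val_lt hnN le_rfl), Nat.sub_add_cancel hn]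
  ring

theorem mixtureEntropy_succ_sub_le (hπ : ∀ w, 0 ≤ π w) (hq : ∀ w, IsPMF (q w)) {n : ℕ}
    (hn : 1 ≤ n) :
    mixtureEntropy π q (n + 1) - mixtureEntropy π q n
      ≤ mixtureEntropy π q n - mixtureEntropy π q (n - 1) := by
  have h := condMI_nonneg (p := iidMixture (ι := Fin (n + 1)) π q)
    (fun ω => mul_nonneg (hπ _) (prod_nonneg fun i _ => (hq _).1 _))
    (fun ω => ω.2 (Fin.last n)) (fun ω => ω.2 ⟨n - 1, by omega⟩)
    (fun ω (k : Fin (n - 1)) => ω.2 ⟨k, by omega⟩)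
  rw [condMI_consecutive_eq (fun w => (hq w).2) hn rfl rfl _ fun _ => rfl] at h
  linarith

lemma sum_condMI_consecutive_eq (hπ : ∑ w, π w = 1) (hq : ∀ w, ∑ x, q w x = 1) {N : ℕ}
    (hN : 1 ≤ N) :
    ∑ n' ∈ Finset.Icc 1 (N - 1), ∑ n ∈ Finset.Icc n' (N - 1),
        condMI (iidMixture π q)
          (fun ωf : 𝓦 × (Fin (N + 1) → 𝓩) => ωf.2 ⟨n % (N + 1), Nat.mod_lt _ (Nat.succ_pos N)⟩)
          (fun ωf => ωf.2 ⟨(n - 1) % (N + 1), Nat.mod_lt _ (Nat.succ_pos N)⟩)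
          (fun ωf => fun i : Fin (n - 1) => ωf.2 ⟨i.val % (N + 1), Nat.mod_lt _ (Nat.succ_pos N)⟩)
      = N * mixtureEntropy π q (N - 1) - (N - 1) * mixtureEntropy π q N := by
  have h := sum_Icc_sum_Icc_second_diff (mixtureEntropy π q) (N - 1)
  rw [Nat.sub_add_cancel hN, Nat.cast_sub hN, Nat.cast_one, sub_add_cancel,
    mixtureEntropy_zero hπ, sub_zero] at h
  rw [← h]
  refine sum_congr rfl fun n' hn' => sum_congr rfl fun n hn => ?_
  rw [mem_Icc] at hn' hn
  exact condMI_consecutive_eq hq (by omega) (Nat.mod_eq_of_lt (by omega))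
    (Nat.mod_eq_of_lt (by omega)) _ fun k => Nat.mod_eq_of_lt (by omega)

end Terms

/-- Corollary 1 (improved CMI bound): under the conditionally i.i.d. model,
`I(W; Z | Z^N) ≤ (1/N) I(W; Z^N) - (1/N) Σ_{n'=1}^{N-1} Σ_{n=n'}^{N-1} I(Z_{n+1}; Zₙ | Z^{n-1})`. -/
theorem cmi_improved_bound {𝓦 𝓩 : Type*} [Fintype 𝓦] [DecidableEq 𝓦] [Fintype 𝓩] [DecidableEq 𝓩]
    (N : ℕ) (hN : 1 ≤ N) (π : 𝓦 → ℝ) (q : 𝓦 → 𝓩 → ℝ)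
    (hπ : IsPMF π) (hq : ∀ w, IsPMF (q w))
    (p : 𝓦 × (Fin (N + 1) → 𝓩) → ℝ)
    (hp : p = fun ωf => π ωf.1 * ∏ i, q ωf.1 (ωf.2 i)) :
    condMI p (fun ωf => ωf.1) (fun ωf => ωf.2 (Fin.last N))
        (fun ωf => fun i : Fin N => ωf.2 i.castSucc)
      ≤ (1 / (N : ℝ)) * mutualInfo p (fun ωf => ωf.1) (fun ωf => fun i : Fin N => ωf.2 i.castSucc)
        - (1 / (N : ℝ)) * ∑ n' ∈ Finset.Icc 1 (N - 1), ∑ n ∈ Finset.Icc n' (N - 1),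
            condMI p (fun ωf => ωf.2 ⟨n % (N + 1), Nat.mod_lt _ (Nat.succ_pos N)⟩)
              (fun ωf => ωf.2 ⟨(n - 1) % (N + 1), Nat.mod_lt _ (Nat.succ_pos N)⟩)
              (fun ωf => fun i : Fin (n - 1) => ωf.2 ⟨i.val % (N + 1), Nat.mod_lt _ (Nat.succ_pos N)⟩) := by
  obtain rfl : p = iidMixture π q := hp
  have hq₁ : ∀ w, ∑ x, q w x = 1 := fun w => (hq w).2
  rw [condMI_fst_last_eq hq₁, mutualInfo_fst_prefix_eq hq₁,
    sum_condMI_consecutive_eq hπ.2 hq₁ hN]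
  have hconcave := mixtureEntropy_succ_sub_le hπ.1 hq hN
  have hN' : (N : ℝ) ≠ 0 := Nat.cast_ne_zero.2 (by omega)
  have hrhs : 1 / (N : ℝ) * (mixtureEntropy π q N - N * componentEntropy π q)
      - 1 / (N : ℝ) * (N * mixtureEntropy π q (N - 1) - (N - 1) * mixtureEntropy π q N)
      = mixtureEntropy π q N - mixtureEntropy π q (N - 1) - componentEntropy π q := by
    field_simp
    ring
  linarith
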